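/- For n ≥ 7, λ(2K_1 + C_{n-2}) > λ(K_2 + M) where M is any matching (disjoint union of edges and isolated vertices) on n-2 vertices; equivalently √(2n-3) + 1 > √(2n-4) + 1 ≥ λ(K_2 + M). -/

import Mathlib

open SimpleGraph Filter

set_option linter.unusedVariables false

/-- The join of two graphs: disjoint union plus all edges between the two vertex sets. -/
def gjoin {α β : Type*} (G : SimpleGraph α) (H : SimpleGraph β) : SimpleGraph (α ⊕ β) where
  Adj x y :=
    match x, y with
    | Sum.inl a, Sum.inl b => G.Adj a b
    | Sum.inr a, Sum.inr b => H.Adj a b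
    | _, _ => True
  symm := ⟨by rintro (a|a) (b|b) h <;> simp_all <;> exact h.symm⟩
  loopless := ⟨by rintro (a|a) h <;> exact (by simp at h : False)⟩

lemma adjMatrix_isHermitian {V : Type*} [Fintype V] (G : SimpleGraph V)
    [DecidableRel G.Adj] : (G.adjMatrix ℝ).IsHermitian := by
  ext i j
  simp [Matrix.conjTranspose, SimpleGraph.adjMatrix, Matrix.transpose, SimpleGraph.adj_comm]

/-- The spectral radius of a finite graph: the largest eigenvalue of its adjacency matrix. -/
noncomputable def specRad {V : Type*} [Fintype V] [DecidableEq V] (G : SimpleGraph V) : ℝ :=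
  letI := Classical.decRel G.Adj
  ⨆ i, (adjMatrix_isHermitian G).eigenvalues i

/-- `G` contains a copy of `H` (a subgraph isomorphic to `H`). -/
def ContainsCopy {α β : Type*} (H : SimpleGraph α) (G : SimpleGraph β) : Prop :=
  ∃ f : H →g G, Function.Injective f

/-- A linear forest: an acyclic graph with maximum degree at most 2,
i.e. a disjoint union of paths (and isolated vertices). -/
def IsLinearForest {V : Type*} (G : SimpleGraph V) : Prop :=
  G.IsAcyclic ∧ ∀ v, (G.neighborSet v).ncard ≤ 2

/-- The graph on `m` vertices consisting of `⌊m/2⌋` disjoint edges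
(plus one isolated vertex if `m` is odd). -/
def matchingGraph (m : ℕ) : SimpleGraph (Fin m) where
  Adj i j := i ≠ j ∧ (i : ℕ) / 2 = (j : ℕ) / 2
  symm := ⟨fun i j h => ⟨h.1.symm, h.2.symm⟩⟩
  loopless := ⟨fun i h => h.1 rfl⟩

/-- `H` is a minor of `G`, witnessed by connected, pairwise disjoint branch sets. -/
def HasMinor {α β : Type*} (G : SimpleGraph α) (H : SimpleGraph β) : Prop :=
  ∃ f : β → Set α,
    (∀ w, (f w).Nonempty) ∧
    (∀ w, ((G.induce (f w)).Connected)) ∧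
    (Pairwise fun w₁ w₂ => Disjoint (f w₁) (f w₂)) ∧
    (∀ w₁ w₂, H.Adj w₁ w₂ → ∃ u ∈ f w₁, ∃ v ∈ f w₂, G.Adj u v)

/-- A graph is planar iff it has no `K₅`-minor and no `K₃,₃`-minor (Wagner's theorem). -/
def IsPlanar {α : Type*} (G : SimpleGraph α) : Prop :=
  ¬ HasMinor G (completeGraph (Fin 5)) ∧
    ¬ HasMinor G (completeBipartiteGraph (Fin 3) (Fin 3))

/-- The maximum number of edges of an `n`-vertex `H`-free linear forest. -/
noncomputable def exF {m : ℕ} (n : ℕ) (H : SimpleGraph (Fin m)) : ℕ :=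
  sSup {e | ∃ G : SimpleGraph (Fin n),
    IsLinearForest G ∧ ¬ ContainsCopy H G ∧ G.edgeSet.ncard = e}

/-- The disjoint union of paths `P_{k-1}` on `n` vertices (consecutive vertices in each
block of `k-1` are joined). -/
def unionOfPaths (k n : ℕ) : SimpleGraph (Fin n) where
  Adj i j := ((i : ℕ) + 1 = j ∨ (j : ℕ) + 1 = i) ∧ (i : ℕ) / (k - 1) = (j : ℕ) / (k - 1)
  symm := ⟨fun i j h => ⟨h.1.symm, h.2.symm⟩⟩
  loopless := ⟨fun i h => by omega⟩


section SpectralAux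

open Matrix Finset

variable {V : Type*} [Fintype V] [DecidableEq V]

lemma specRad_eq_aux (G : SimpleGraph V) [inst : DecidableRel G.Adj] :
    specRad G = ⨆ i, (adjMatrix_isHermitian G).eigenvalues i := by
  unfold specRad
  congr!

lemma evec_dot_self_aux (A : Matrix V V ℝ) (hA : A.IsHermitian) (i : V) :
    (⇑(hA.eigenvectorBasis i) : V → ℝ) ⬝ᵥ (⇑(hA.eigenvectorBasis i) : V → ℝ) = 1 := by
  have h1 := hA.eigenvectorBasis.orthonormal.1 i
  have h2 : (inner ℝ (hA.eigenvectorBasis i) (hA.eigenvectorBasis i) : ℝ) = 1 := by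
    rw [real_inner_self_eq_norm_sq, h1]; norm_num
  rw [EuclideanSpace.inner_eq_star_dotProduct] at h2
  simpa [WithLp.equiv] using h2

lemma sup_le_of_quad_aux (A : Matrix V V ℝ) (hA : A.IsHermitian) [Nonempty V] (c : ℝ)
    (h : ∀ x : V → ℝ, x ⬝ᵥ (A *ᵥ x) ≤ c * (x ⬝ᵥ x)) : (⨆ i, hA.eigenvalues i) ≤ c := by
  apply ciSup_le
  intro i
  have e1 : hA.eigenvalues i
      = (⇑(hA.eigenvectorBasis i) : V → ℝ) ⬝ᵥ (A *ᵥ ⇑(hA.eigenvectorBasis i)) := by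
    simpa using hA.eigenvalues_eq i
  have := h (⇑(hA.eigenvectorBasis i))
  rw [evec_dot_self_aux A hA i, mul_one] at this
  linarith [e1 ▸ this]

lemma quad_le_sup_aux (A : Matrix V V ℝ) (hA : A.IsHermitian) [Nonempty V] (x : V → ℝ) :
    x ⬝ᵥ (A *ᵥ x) ≤ (⨆ i, hA.eigenvalues i) * (x ⬝ᵥ x) := by
  set U : Matrix V V ℝ := (hA.eigenvectorUnitary : Matrix V V ℝ) with hU
  set y : V → ℝ := star U *ᵥ x with hy
  have hvm : x ᵥ* U = y := by
    ext i
    simp [hy, vecMul, mulVec, dotProduct, conjTranspose_apply, mul_comm]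
  have hyval : ∀ i, y i = ∑ j, hA.eigenvectorBasis i j * x j := by
    intro i
    simp [hy, mulVec, dotProduct, conjTranspose_apply, hU]
  have key : x ⬝ᵥ (A *ᵥ x) = ∑ i, hA.eigenvalues i * (y i)^2 := by
    conv_lhs => rw [hA.spectral_theorem]
    rw [Unitary.conjStarAlgAut_apply, ← mulVec_mulVec, ← mulVec_mulVec, dotProduct_mulVec, hvm]
    simp only [mulVec_diagonal y, dotProduct, Function.comp]
    apply Finset.sum_congr rfl
    intro i _
    simp [mulVec_diagonal, Function.comp, ← hyval i]
    ring
  have key2 : x ⬝ᵥ x = ∑ i, (y i)^2 := by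
    have h1 : x ⬝ᵥ ((U * star U) *ᵥ x) = y ⬝ᵥ y := by
      rw [← mulVec_mulVec, dotProduct_mulVec, hvm]
    have h2 : U * star U = 1 := (Matrix.mem_unitaryGroup_iff).mp (hA.eigenvectorUnitary).2
    rw [h2, one_mulVec] at h1
    rw [h1]
    simp [dotProduct, sq]
  rw [key, key2, Finset.mul_sum]
  apply Finset.sum_le_sum
  intro i _
  have hle : hA.eigenvalues i ≤ ⨆ j, hA.eigenvalues j :=
    le_ciSup (Set.Finite.bddAbove (Set.finite_range _)) i
  nlinarith [sq_nonneg (y i)]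

lemma quadform_eq_aux (G : SimpleGraph V) [DecidableRel G.Adj] (x : V → ℝ) :
    x ⬝ᵥ ((G.adjMatrix ℝ) *ᵥ x) = ∑ u, ∑ v, if G.Adj u v then x u * x v else 0 := by
  simp [dotProduct, mulVec, Finset.mul_sum, SimpleGraph.adjMatrix_apply, mul_ite, ite_mul]

lemma specRad_le_of_aux [Nonempty V] (G : SimpleGraph V) [DecidableRel G.Adj] (c : ℝ)
    (h : ∀ x : V → ℝ, (∑ u, ∑ v, if G.Adj u v then x u * x v else 0) ≤ c * ∑ u, (x u)^2) :
    specRad G ≤ c := by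
  rw [specRad_eq_aux G]
  apply sup_le_of_quad_aux _ _ c
  intro x
  rw [quadform_eq_aux]
  calc (∑ u, ∑ v, if G.Adj u v then x u * x v else 0) ≤ c * ∑ u, (x u)^2 := h x
    _ = c * (x ⬝ᵥ x) := by simp [dotProduct, sq]

lemma le_specRad_of_aux [Nonempty V] (G : SimpleGraph V) [DecidableRel G.Adj] (c : ℝ)
    (x : V → ℝ) (hx : 0 < ∑ u, (x u)^2)
    (h : c * ∑ u, (x u)^2 ≤ ∑ u, ∑ v, if G.Adj u v then x u * x v else 0) :
    c ≤ specRad G := by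
  rw [specRad_eq_aux G]
  have h2 := quad_le_sup_aux (G.adjMatrix ℝ) (adjMatrix_isHermitian G) x
  rw [quadform_eq_aux] at h2
  have hxx : (x ⬝ᵥ x) = ∑ u, (x u)^2 := by simp [dotProduct, sq]
  rw [hxx] at h2
  have := le_trans h h2
  exact le_of_mul_le_mul_right (by linarith) hx

lemma gjoin_adj_inl_inl {α β : Type*} (G : SimpleGraph α) (H : SimpleGraph β) (a b : α) :
    (gjoin G H).Adj (Sum.inl a) (Sum.inl b) ↔ G.Adj a b := Iff.rfl

lemma gjoin_adj_inr_inr {α β : Type*} (G : SimpleGraph α) (H : SimpleGraph β) (a b : β) :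
    (gjoin G H).Adj (Sum.inr a) (Sum.inr b) ↔ H.Adj a b := Iff.rfl

lemma gjoin_adj_inl_inr {α β : Type*} (G : SimpleGraph α) (H : SimpleGraph β) (a : α) (b : β) :
    (gjoin G H).Adj (Sum.inl a) (Sum.inr b) := trivial

lemma gjoin_adj_inr_inl {α β : Type*} (G : SimpleGraph α) (H : SimpleGraph β) (a : α) (b : β) :
    (gjoin G H).Adj (Sum.inr b) (Sum.inl a) := trivial

lemma upper_aux (m : ℕ) (hm : 5 ≤ m) (M : SimpleGraph (Fin m))
    (hM : ∀ v, (M.neighborSet v).ncard ≤ 1) :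
    specRad (gjoin (completeGraph (Fin 2)) M) ≤ Real.sqrt (2 * m) + 1 := by
  classical
  haveI : Nonempty (Fin 2 ⊕ Fin m) := ⟨Sum.inl 0⟩
  have hm0 : (0:ℝ) < m := by exact_mod_cast Nat.pos_of_ne_zero (by omega)
  set s : ℝ := Real.sqrt (2 * m) with hs
  have hs0 : 0 < s := Real.sqrt_pos.mpr (by linarith)
  have hs2 : s^2 = 2 * m := Real.sq_sqrt (by linarith)
  apply specRad_le_of_aux _ (s + 1)
  intro x
  set x1 := x (Sum.inl 0) with hx1
  set x2 := x (Sum.inl 1) with hx2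
  set S := ∑ j, x (Sum.inr j) with hSdef
  set b2 := ∑ j, (x (Sum.inr j))^2 with hb2def
  set Q := ∑ j, ∑ k, if M.Adj j k then x (Sum.inr j) * x (Sum.inr k) else 0 with hQdef
  have hb2 : 0 ≤ b2 := Finset.sum_nonneg fun j _ => sq_nonneg _
  -- Cauchy-Schwarz
  have hS2 : S^2 ≤ m * b2 := by
    have := sq_sum_le_card_mul_sum_sq (s := (Finset.univ : Finset (Fin m)))
      (f := fun j => x (Sum.inr j))
    simpa [hSdef, hb2def] using this
  -- degree bound
  have hdeg : ∀ j, (∑ k, if M.Adj j k then (1:ℝ) else 0) ≤ 1 := by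
    intro j
    rw [Finset.sum_boole]
    have e1 : Finset.univ.filter (M.Adj j) = M.neighborFinset j := by
      ext k; simp
    have e2 := hM j
    rw [Set.ncard_eq_toFinset_card'] at e2
    have e3 : (M.neighborFinset j).card ≤ 1 := by
      rw [SimpleGraph.neighborFinset_def]
      convert e2 using 2
    rw [e1]
    exact_mod_cast e3
  -- matching bound
  have hQ : Q ≤ b2 := by
    have step1 : Q ≤ ∑ j, ∑ k, ((if M.Adj j k then (x (Sum.inr j))^2/2 else 0)
        + (if M.Adj j k then (x (Sum.inr k))^2/2 else 0)) := by
      rw [hQdef]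
      apply Finset.sum_le_sum; intro j _
      apply Finset.sum_le_sum; intro k _
      split_ifs with h
      · nlinarith [sq_nonneg (x (Sum.inr j) - x (Sum.inr k))]
      · simp
    have e4 : ∀ j, (∑ k, if M.Adj j k then (x (Sum.inr j))^2/2 else 0)
        ≤ (x (Sum.inr j))^2/2 := by
      intro j
      have : (∑ k, if M.Adj j k then (x (Sum.inr j))^2/2 else 0)
          = (∑ k, if M.Adj j k then (1:ℝ) else 0) * ((x (Sum.inr j))^2/2) := by
        rw [Finset.sum_mul]
        apply Finset.sum_congr rfl
        intro k _; split_ifs <;> simp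
      rw [this]
      have := hdeg j
      nlinarith [sq_nonneg (x (Sum.inr j))]
    have e5 : (∑ j, ∑ k, if M.Adj j k then (x (Sum.inr k))^2/2 else 0)
        ≤ ∑ k : Fin m, (x (Sum.inr k))^2/2 := by
      rw [Finset.sum_comm]
      apply Finset.sum_le_sum; intro k _
      have : (∑ j, if M.Adj j k then (x (Sum.inr k))^2/2 else 0)
          = (∑ j, if M.Adj k j then (1:ℝ) else 0) * ((x (Sum.inr k))^2/2) := by
        rw [Finset.sum_mul]
        apply Finset.sum_congr rfl
        intro j _
        rw [SimpleGraph.adj_comm]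
        split_ifs <;> simp
      rw [this]
      have := hdeg k
      nlinarith [sq_nonneg (x (Sum.inr k))]
    calc Q ≤ _ := step1
      _ = (∑ j, ∑ k, if M.Adj j k then (x (Sum.inr j))^2/2 else 0)
          + (∑ j, ∑ k, if M.Adj j k then (x (Sum.inr k))^2/2 else 0) := by
        rw [← Finset.sum_add_distrib]
        apply Finset.sum_congr rfl
        intro j _
        rw [← Finset.sum_add_distrib]
      _ ≤ (∑ j, (x (Sum.inr j))^2/2) + (∑ k : Fin m, (x (Sum.inr k))^2/2) := by
        exact add_le_add (Finset.sum_le_sum fun j _ => e4 j) e5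
      _ = b2 := by rw [hb2def, ← Finset.sum_add_distrib]; apply Finset.sum_congr rfl; intros; ring
  -- expand the quadratic form
  have expand : (∑ u, ∑ v, if (gjoin (completeGraph (Fin 2)) M).Adj u v
        then x u * x v else 0)
      = 2*x1*x2 + 2*(x1 + x2)*S + Q := by
    rw [Fintype.sum_sum_type]
    simp only [Fintype.sum_sum_type, gjoin_adj_inl_inl, gjoin_adj_inr_inr,
      gjoin_adj_inl_inr, gjoin_adj_inr_inl, if_true]
    simp only [Finset.sum_add_distrib, Fin.sum_univ_two, completeGraph, SimpleGraph.top_adj]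
    norm_num
    rw [← Finset.mul_sum, ← Finset.mul_sum, ← Finset.sum_mul, ← Finset.sum_mul]
    rw [hQdef, hSdef, hx1, hx2]
    ring
  have expandN : (∑ u : Fin 2 ⊕ Fin m, (x u)^2) = x1^2 + x2^2 + b2 := by
    rw [Fintype.sum_sum_type, Fin.sum_univ_two, hb2def, hx1, hx2]
  rw [expand, expandN]
  nlinarith [sq_nonneg (s*(x1+x2) - 2*S), sq_nonneg (x1 - x2), sq_nonneg (x1 + x2),
    mul_nonneg hs0.le hb2, mul_nonneg hs0.le (sq_nonneg (x1 + x2))]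


lemma lower_aux (m : ℕ) (hm : 5 ≤ m) :
    Real.sqrt (2 * m + 1) + 1 ≤ specRad (gjoin (⊥ : SimpleGraph (Fin 2)) (cycleGraph m)) := by
  classical
  haveI : Nonempty (Fin 2 ⊕ Fin m) := ⟨Sum.inl 0⟩
  have hm0 : (0:ℝ) < m := by exact_mod_cast Nat.pos_of_ne_zero (by omega)
  set c : ℝ := Real.sqrt (2 * m + 1) with hc
  have hc2 : c^2 = 2 * m + 1 := Real.sq_sqrt (by linarith)
  have hc1 : 1 ≤ c := by nlinarith [Real.sqrt_nonneg (2 * (m:ℝ) + 1)]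
  set a : ℝ := (c - 1)/2 with ha
  set x : Fin 2 ⊕ Fin m → ℝ := Sum.elim (fun _ => a) (fun _ => 1) with hx
  -- degree of cycle
  obtain ⟨m', rfl⟩ : ∃ m', m = m' + 3 := ⟨m - 3, by omega⟩
  have hdeg : ∀ j : Fin (m' + 3),
      (∑ k, if (cycleGraph (m' + 3)).Adj j k then (1:ℝ) else 0) = 2 := by
    intro j
    rw [Finset.sum_boole]
    have e1 : Finset.univ.filter ((cycleGraph (m' + 3)).Adj j)
        = (cycleGraph (m' + 3)).neighborFinset j := by
      ext k; simp
    rw [e1]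
    have := SimpleGraph.cycleGraph_degree_three_le (n := m') (v := j)
    rw [SimpleGraph.degree] at this
    rw [this]
    norm_num
  apply le_specRad_of_aux _ (c + 1) x
  · rw [Fintype.sum_sum_type, Fin.sum_univ_two]
    simp only [hx, Sum.elim_inl, Sum.elim_inr, one_pow, Finset.sum_const,
      Finset.card_univ, Fintype.card_fin, nsmul_eq_mul, mul_one]
    push_cast
    nlinarith [sq_nonneg a]
  · have expand : (∑ u, ∑ v, if (gjoin (⊥ : SimpleGraph (Fin 2)) (cycleGraph (m' + 3))).Adj u v
        then x u * x v else 0) = 4*a*(m' + 3) + 2*(m' + 3) := by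
      rw [Fintype.sum_sum_type]
      simp only [Fintype.sum_sum_type, gjoin_adj_inl_inl, gjoin_adj_inr_inr,
        gjoin_adj_inl_inr, gjoin_adj_inr_inl, if_true, SimpleGraph.bot_adj, if_false,
        hx, Sum.elim_inl, Sum.elim_inr, mul_one, one_mul]
      simp only [Finset.sum_add_distrib, Finset.sum_const, Finset.card_univ,
        Fintype.card_fin, Fin.sum_univ_two, nsmul_eq_mul, smul_eq_mul]
      rw [Finset.sum_congr rfl (fun j _ => hdeg j)]
      simp [Finset.sum_const]
      push_cast
      ring
    rw [expand]
    have expandN : (∑ u : Fin 2 ⊕ Fin (m' + 3), (x u)^2) = 2*a^2 + (m' + 3) := by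
      rw [Fintype.sum_sum_type, Fin.sum_univ_two]
      simp only [hx, Sum.elim_inl, Sum.elim_inr, one_pow, Finset.sum_const,
        Finset.card_univ, Fintype.card_fin, nsmul_eq_mul, mul_one]
      push_cast
      ring
    rw [expandN]
    have key : (c + 1) * (2*a^2 + ((m':ℝ) + 3)) = 4*a*((m':ℝ) + 3) + 2*((m':ℝ) + 3) := by
      rw [ha]
      have hmc : ((m':ℝ) + 3) = (c^2 - 1)/2 := by
        push_cast at hc2 ⊢
        linarith
      rw [hmc]
      ring
    push_cast
    push_cast at key
    linarith [key.le]

end SpectralAux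

/-- For `n ≥ 7` and any matching `M` on `n-2` vertices,
`λ(K₂ + M) ≤ √(2n-4) + 1 < √(2n-3) + 1 = λ(2K₁ + C_{n-2})`. -/
theorem K2_join_matching_lt (n : ℕ) (hn : 7 ≤ n) (M : SimpleGraph (Fin (n - 2)))
    (hM : ∀ v, (M.neighborSet v).ncard ≤ 1) :
    specRad (gjoin (completeGraph (Fin 2)) M) ≤ Real.sqrt (2 * (n : ℝ) - 4) + 1 ∧
      Real.sqrt (2 * (n : ℝ) - 4) + 1 < Real.sqrt (2 * (n : ℝ) - 3) + 1 ∧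
      specRad (gjoin (completeGraph (Fin 2)) M) <
        specRad (gjoin (⊥ : SimpleGraph (Fin 2)) (cycleGraph (n - 2))) := by
  have hcast : ((n - 2 : ℕ):ℝ) = (n:ℝ) - 2 := by
    rw [Nat.cast_sub (by omega : 2 ≤ n)]; norm_num
  have hup := upper_aux (n-2) (by omega) M hM
  have hlo := lower_aux (n-2) (by omega)
  have e24 : 2 * ((n - 2:ℕ):ℝ) = 2*(n:ℝ) - 4 := by rw [hcast]; ring
  have e23 : 2 * ((n - 2:ℕ):ℝ) + 1 = 2*(n:ℝ) - 3 := by rw [hcast]; ring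
  rw [e24] at hup
  rw [e23] at hlo
  have hn7 : (7:ℝ) ≤ n := by exact_mod_cast hn
  have hlt : Real.sqrt (2*(n:ℝ)-4) < Real.sqrt (2*(n:ℝ)-3) :=
    Real.sqrt_lt_sqrt (by linarith) (by linarith)
  exact ⟨hup, by linarith, by linarith⟩
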